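/- On the disk D, the square of g equals the twist: for every p ∈ D, g(g(p)) = ψ(p). -/

import Mathlib

open Real MeasureTheory

noncomputable section

instance : Fact (0 < 2 * π) := ⟨by positivity⟩

/-- The cylinder `(ℝ/2πℤ) × ℝ`. -/
abbrev Cyl : Type := AddCircle (2 * π) × ℝ

/-- The quotient map `ℝ² → Cyl`. -/
def q2 (v : ℝ × ℝ) : Cyl := ((v.1 : AddCircle (2 * π)), v.2)

/-- The lift of a point of the cylinder to the fundamental domain `[-π, π) × ℝ`. -/
def cylLift (m : Cyl) : ℝ × ℝ :=
  ((AddCircle.equivIco (2 * π) (-π) m.1 : ℝ), m.2)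

/-- The Euclidean norm on `ℝ × ℝ`. -/
def eNorm (v : ℝ × ℝ) : ℝ := Real.sqrt (v.1 ^ 2 + v.2 ^ 2)

/-- Rotation of the plane about the origin by angle `a`. -/
def rot (a : ℝ) (v : ℝ × ℝ) : ℝ × ℝ :=
  (Real.cos a * v.1 - Real.sin a * v.2, Real.sin a * v.1 + Real.cos a * v.2)

/-- The planar twist map: rotate `v` about the origin by the angle `α (eNorm v)`. -/
def twist (α : ℝ → ℝ) (v : ℝ × ℝ) : ℝ × ℝ := rot (α (eNorm v)) v

/-- The twist map descended to the cylinder. -/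
def psi (α : ℝ → ℝ) (m : Cyl) : Cyl := q2 (twist α (cylLift m))

/-- The half rotation `(θ, s) ↦ (θ + π, s)` of the cylinder. -/
def phi (m : Cyl) : Cyl := (m.1 + ((π : ℝ) : AddCircle (2 * π)), m.2)

/-- The composition `g = φ ∘ ψ`. -/
def gmap (α : ℝ → ℝ) : Cyl → Cyl := phi ∘ psi α

/-- The image in the cylinder of the open Euclidean unit disk centered at the origin. -/
def Dset : Set Cyl := q2 '' {v : ℝ × ℝ | eNorm v < 1}

/-- The distance on the cylinder induced by the Euclidean metric on `ℝ²`. -/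
def cylDist (x y : Cyl) : ℝ := Real.sqrt (dist x.1 y.1 ^ 2 + dist x.2 y.2 ^ 2)

/-- The hypotheses on the twist angle profile `α`: continuous, non-increasing on `[0, ∞)`,
greater than `0.2` on `[0, 0.7]` and vanishing on `[0.9, ∞)`. -/
structure TwistAngle (α : ℝ → ℝ) : Prop where
  cont : Continuous α
  anti : AntitoneOn α (Set.Ici 0)
  big : ∀ r ∈ Set.Icc (0 : ℝ) 0.7, 0.2 < α r
  zero : ∀ r : ℝ, 0.9 ≤ r → α r = 0

/-
The twist ψ maps `D` into itself, and points of `D` have angular lift in `(-1, 1)`. The half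
rotation φ sends such a point to angular lift of absolute value `> π - 1 > 0.9`, where `α`
vanishes, so ψ fixes it. Hence `g (g p) = φ (ψ (φ (ψ p))) = φ (φ (ψ p)) = ψ p`.
-/

lemma equivIco_coe_of_mem_Ico {x : ℝ} (hx : x ∈ Set.Ico (-π) π) :
    (AddCircle.equivIco (2 * π) (-π) (x : AddCircle (2 * π)) : ℝ) = x :=
  AddCircle.equivIco_coe_of_mem (by rwa [show -π + 2 * π = π by ring])

lemma abs_equivIco_add_pi (θ : AddCircle (2 * π)) :
    |(AddCircle.equivIco (2 * π) (-π) (θ + (π : AddCircle (2 * π))) : ℝ)|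
      = π - |(AddCircle.equivIco (2 * π) (-π) θ : ℝ)| := by
  set x : ℝ := (AddCircle.equivIco (2 * π) (-π) θ : ℝ)
  obtain ⟨hlo, hhi⟩ : x ∈ Set.Ico (-π) π := by
    simpa [show -π + 2 * π = π by ring] using (AddCircle.equivIco (2 * π) (-π) θ).2
  have hθ : θ = x := AddCircle.coe_equivIco.symm
  rw [hθ, ← AddCircle.coe_add]
  rcases lt_or_ge x 0 with hneg | hnonneg
  · rw [equivIco_coe_of_mem_Ico ⟨by linarith, by linarith⟩, abs_of_nonneg (by linarith),
      abs_of_neg hneg]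
    ring
  · have hshift : ((x + π : ℝ) : AddCircle (2 * π)) = ((x - π : ℝ) : AddCircle (2 * π)) := by
      rw [show x + π = x - π + 2 * π by ring, AddCircle.coe_add_period]
    rw [hshift, equivIco_coe_of_mem_Ico ⟨by linarith, by linarith [pi_pos]⟩,
      abs_of_nonpos (by linarith), abs_of_nonneg hnonneg]
    ring

lemma cylLift_q2 {v : ℝ × ℝ} (hv : v.1 ∈ Set.Ico (-π) π) : cylLift (q2 v) = v :=
  Prod.ext (equivIco_coe_of_mem_Ico hv) rfl

lemma q2_cylLift (m : Cyl) : q2 (cylLift m) = m :=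
  Prod.ext AddCircle.coe_equivIco rfl

lemma eNorm_rot (a : ℝ) (v : ℝ × ℝ) : eNorm (rot a v) = eNorm v := by
  unfold eNorm rot
  congr 1
  linear_combination (v.1 ^ 2 + v.2 ^ 2) * sin_sq_add_cos_sq a

lemma abs_fst_le_eNorm (v : ℝ × ℝ) : |v.1| ≤ eNorm v := by
  rw [← Real.sqrt_sq_eq_abs]
  exact Real.sqrt_le_sqrt (by nlinarith [sq_nonneg v.2])

lemma psi_q2 (α : ℝ → ℝ) {v : ℝ × ℝ} (hv : v.1 ∈ Set.Ico (-π) π) :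
    psi α (q2 v) = q2 (twist α v) := by
  rw [psi, cylLift_q2 hv]

lemma fst_mem_Ico_of_mem_unitDisk {v : ℝ × ℝ} (hv : eNorm v < 1) : v.1 ∈ Set.Ico (-π) π := by
  obtain ⟨hlo, hhi⟩ := abs_lt.mp ((abs_fst_le_eNorm v).trans_lt hv)
  exact ⟨by linarith [pi_gt_three], by linarith [pi_gt_three]⟩

lemma psi_mem_Dset (α : ℝ → ℝ) {m : Cyl} (hm : m ∈ Dset) : psi α m ∈ Dset := by
  obtain ⟨v, hv, rfl⟩ := hm
  refine ⟨twist α v, ?_, (psi_q2 α (fst_mem_Ico_of_mem_unitDisk hv)).symm⟩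
  show eNorm (rot _ v) < 1
  rwa [eNorm_rot]

lemma abs_cylLift_fst_lt_one {m : Cyl} (hm : m ∈ Dset) : |(cylLift m).1| < 1 := by
  obtain ⟨v, hv, rfl⟩ := hm
  rw [cylLift_q2 (fst_mem_Ico_of_mem_unitDisk hv)]
  exact (abs_fst_le_eNorm v).trans_lt hv

lemma psi_eq_self_of_eq_zero {α : ℝ → ℝ} {m : Cyl} (h : α (eNorm (cylLift m)) = 0) :
    psi α m = m := by
  rw [psi, twist, h]
  simpa [rot] using q2_cylLift m

lemma psi_phi_of_mem_Dset {α : ℝ → ℝ} (hα : ∀ r : ℝ, 0.9 ≤ r → α r = 0) {m : Cyl}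
    (hm : m ∈ Dset) : psi α (phi m) = phi m := by
  refine psi_eq_self_of_eq_zero (hα _ ((?_ : (0.9 : ℝ) ≤ _).trans (abs_fst_le_eNorm _)))
  have hlift : |(cylLift (phi m)).1| = π - |(cylLift m).1| := abs_equivIco_add_pi m.1
  linarith [abs_cylLift_fst_lt_one hm, pi_gt_three]

lemma phi_involutive : Function.Involutive phi := fun m => by
  refine Prod.ext ?_ rfl
  show m.1 + (π : AddCircle (2 * π)) + (π : AddCircle (2 * π)) = m.1
  rw [add_assoc, ← AddCircle.coe_add, show π + π = 2 * π by ring, AddCircle.coe_period, add_zero]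

/-- on the disk D, the square of g equals the twist ψ. -/
theorem gmap_sq_eq_twist_on_disk (α : ℝ → ℝ) (hα : TwistAngle α) :
    ∀ p ∈ Dset, gmap α (gmap α p) = psi α p := by
  intro p hp
  calc gmap α (gmap α p) = phi (psi α (phi (psi α p))) := rfl
    _ = phi (phi (psi α p)) := by rw [psi_phi_of_mem_Dset hα.zero (psi_mem_Dset α hp)]
    _ = psi α p := phi_involutive _
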